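/- arXiv:2011.08147 — 5 statements merged into one kernel-verified Lean document; each statement's English description precedes it below -/
import Mathlib

section
/- Let X be a compact metric space and ρ : C(X) → ℝ≥0 a function on subcontinua of X such that for all nontrivial continua A, B with A ∪ B a continuum, ρ(A ∪ B) ≤ 2·max(ρ(A), ρ(B)), and ρ is monotone under inclusion of continua. Then for any continua C₁, …, Cₙ with Cᵢ ∩ Cᵢ₊₁ ≠ ∅ for all i, one has ρ(C₁ ∪ ⋯ ∪ Cₙ) ≤ 2ρ(C₁) + 4ρ(C₂) + ⋯ + 4ρ(C_{n-1}) + 2ρ(Cₙ). -/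
open Metric Set

variable {X : Type*} [MetricSpace X]

/-- Two-sided iteration of a homeomorphism. -/
def zIter (f : X ≃ₜ X) (n : ℤ) (x : X) : X :=
  if 0 ≤ n then (⇑f)^[n.toNat] x else (⇑f.symm)^[(-n).toNat] x

/-- A subcontinuum: a compact connected (nonempty) subset. -/
def IsContinuum (A : Set X) : Prop := IsCompact A ∧ IsConnected A

/-- Local stable set. -/
def Ws (f : X ≃ₜ X) (ε : ℝ) (x : X) : Set X :=
  {y | ∀ n : ℕ, dist ((⇑f)^[n] x) ((⇑f)^[n] y) ≤ ε}

/-- Local unstable set. -/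
def Wu (f : X ≃ₜ X) (ε : ℝ) (x : X) : Set X :=
  {y | ∀ n : ℕ, dist ((⇑f.symm)^[n] x) ((⇑f.symm)^[n] y) ≤ ε}

/-- Local stable continuum: connected component of the local stable set. -/
def Cs (f : X ≃ₜ X) (ε : ℝ) (x : X) : Set X := connectedComponentIn (Ws f ε x) x

/-- Local unstable continuum. -/
def Cu (f : X ≃ₜ X) (ε : ℝ) (x : X) : Set X := connectedComponentIn (Wu f ε x) x

/-- cw-expansivity with a given constant. -/
def CwExpansiveWith (f : X ≃ₜ X) (c : ℝ) : Prop :=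
  0 < c ∧ ∀ C : Set X, IsContinuum C →
    (∀ n : ℤ, Metric.diam (zIter f n '' C) ≤ c) → C.Subsingleton

/-- Continuum-wise expansivity. -/
def CwExpansive (f : X ≃ₜ X) : Prop := ∃ c, CwExpansiveWith f c

/-- cw-local-product-structure. -/
def CwLPS (f : X ≃ₜ X) : Prop :=
  ∀ ε > 0, ∃ δ > 0, ∀ x y : X, dist x y < δ → (Cu f ε x ∩ Cs f ε y).Nonempty

/-- Continuum-wise hyperbolicity. -/
def CwHyperbolic (f : X ≃ₜ X) : Prop := CwExpansive f ∧ CwLPS f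

/-- cwN-expansivity. -/
def CwNExpansive (f : X ≃ₜ X) (N : ℕ) : Prop :=
  ∃ c > 0, ∀ x : X,
    (Cs f c x ∩ Cu f c x).Finite ∧ (Cs f c x ∩ Cu f c x).ncard ≤ N

/-- cwN-hyperbolicity. -/
def CwNHyperbolic (f : X ≃ₜ X) (N : ℕ) : Prop := CwHyperbolic f ∧ CwNExpansive f N

section FrinkAux

variable {Y : Type*} [MetricSpace Y]

private lemma sum_split' (f : ℕ → ℝ) (a k b : ℕ) (h1 : a ≤ k) (h2 : k < b) :
    ∑ i ∈ Finset.Icc a b, f i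
      = (∑ i ∈ Finset.Icc a k, f i) + ∑ i ∈ Finset.Icc (k+1) b, f i := by
  rw [← Finset.sum_union]
  · apply Finset.sum_congr _ (fun _ _ => rfl)
    ext x
    simp only [Finset.mem_Icc, Finset.mem_union]
    omega
  · rw [Finset.disjoint_left]
    intro x hx hx'
    simp only [Finset.mem_Icc] at hx hx'
    omega

private lemma biUnion_split' (C : ℕ → Set Y) (a k b : ℕ) (h1 : a ≤ k) (h2 : k < b) :
    (⋃ i ∈ Finset.Icc a b, C i)
      = (⋃ i ∈ Finset.Icc a k, C i) ∪ ⋃ i ∈ Finset.Icc (k+1) b, C i := by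
  ext x
  simp only [Set.mem_union, Set.mem_iUnion, Finset.mem_Icc, exists_prop]
  constructor
  · rintro ⟨i, hi, hx⟩
    by_cases h : i ≤ k
    · exact Or.inl ⟨i, ⟨hi.1, h⟩, hx⟩
    · exact Or.inr ⟨i, ⟨by omega, hi.2⟩, hx⟩
  · rintro (⟨i, hi, hx⟩ | ⟨i, hi, hx⟩) <;> exact ⟨i, ⟨by omega, by omega⟩, hx⟩

private lemma biUnion_single' (C : ℕ → Set Y) (a : ℕ) :
    (⋃ i ∈ Finset.Icc a a, C i) = C a := by
  simp [Finset.Icc_self]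

private lemma union_cont' (C : ℕ → Set Y) (a : ℕ) :
    ∀ b, a ≤ b → (∀ i, a ≤ i → i ≤ b → IsContinuum (C i)) →
    (∀ i, a ≤ i → i < b → (C i ∩ C (i+1)).Nonempty) →
    IsContinuum (⋃ i ∈ Finset.Icc a b, C i) := by
  intro b
  induction b with
  | zero =>
      intro hab hc _
      have : a = 0 := by omega
      subst this
      rw [biUnion_single']
      exact hc 0 le_rfl le_rfl
  | succ b ih =>
      intro hab hc hch
      by_cases hab' : a = b + 1
      · rw [hab', biUnion_single']
        exact hc (b+1) (by omega) le_rfl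
      · have hab2 : a ≤ b := by omega
        have hsplit := biUnion_split' C a b (b+1) hab2 (by omega)
        rw [biUnion_single'] at hsplit
        rw [hsplit]
        have hL : IsContinuum (⋃ i ∈ Finset.Icc a b, C i) :=
          ih hab2 (fun i h1 h2 => hc i h1 (by omega)) (fun i h1 h2 => hch i h1 (by omega))
        have hR : IsContinuum (C (b+1)) := hc (b+1) (by omega) le_rfl
        obtain ⟨x, hx1, hx2⟩ := hch b hab2 (by omega)
        have hxL : x ∈ ⋃ i ∈ Finset.Icc a b, C i :=
          Set.mem_biUnion (Finset.mem_Icc.mpr (by omega)) hx1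
        exact ⟨hL.1.union hR.1, hL.2.union ⟨x, hxL, hx2⟩ hR.2⟩

variable (ρ : Set Y → ℝ)

private lemma two_tri (hnn : ∀ A : Set Y, 0 ≤ ρ A)
    (htri : ∀ A B : Set Y, IsContinuum A → IsContinuum B →
      ¬A.Subsingleton → ¬B.Subsingleton → IsContinuum (A ∪ B) →
      ρ (A ∪ B) ≤ 2 * max (ρ A) (ρ B))
    (A B : Set Y) (hA : IsContinuum A) (hB : IsContinuum B)
    (hAB : (A ∩ B).Nonempty) : ρ (A ∪ B) ≤ 2 * max (ρ A) (ρ B) := by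
  obtain ⟨x, hxA, hxB⟩ := hAB
  have hUn : IsContinuum (A ∪ B) := ⟨hA.1.union hB.1, hA.2.union ⟨x, hxA, hxB⟩ hB.2⟩
  by_cases hsA : A.Subsingleton
  · have hAB' : A ∪ B = B := by
      apply Set.union_eq_self_of_subset_left
      intro y hy; rwa [hsA hy hxA]
    rw [hAB']
    have := hnn B
    have := le_max_right (ρ A) (ρ B)
    linarith
  by_cases hsB : B.Subsingleton
  · have hAB' : A ∪ B = A := by
      apply Set.union_eq_self_of_subset_right
      intro y hy; rwa [hsB hy hxB]
    rw [hAB']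
    have := hnn A
    have := le_max_left (ρ A) (ρ B)
    linarith
  exact htri A B hA hB hsA hsB hUn

variable (C : ℕ → Set Y)

/-- weighted sum: weight 1 at endpoints, 2 inside. -/
private def Tw (a b : ℕ) : ℝ :=
  ∑ i ∈ Finset.Icc a b, (if i = a ∨ i = b then 1 else 2) * ρ (C i)

/-- plain sum -/
private def Sw (a b : ℕ) : ℝ := ∑ i ∈ Finset.Icc a b, ρ (C i)

variable (hnn : ∀ A : Set Y, 0 ≤ ρ A)
include hnn

private lemma Sw_nonneg (a b : ℕ) : 0 ≤ Sw ρ C a b :=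
  Finset.sum_nonneg fun i _ => hnn (C i)

private lemma Tw_nonneg (a b : ℕ) : 0 ≤ Tw ρ C a b := by
  apply Finset.sum_nonneg
  intro i _
  have := hnn (C i)
  split <;> linarith

private lemma Sw_single (a : ℕ) : Sw ρ C a a = ρ (C a) := by
  simp [Sw]

private lemma Tw_single (a : ℕ) : Tw ρ C a a = ρ (C a) := by
  simp [Tw]

private lemma Sw_split (a k b : ℕ) (h1 : a ≤ k) (h2 : k < b) :
    Sw ρ C a b = Sw ρ C a k + Sw ρ C (k+1) b :=
  sum_split' _ a k b h1 h2

private lemma mem_le_Sw (a b i : ℕ) (h1 : a ≤ i) (h2 : i ≤ b) :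
    ρ (C i) ≤ Sw ρ C a b :=
  Finset.single_le_sum (fun j _ => hnn (C j)) (by simp [Finset.mem_Icc]; omega)

private lemma pair_le_Sw (a b : ℕ) (h : a < b) :
    ρ (C a) + ρ (C b) ≤ Sw ρ C a b := by
  have h1 : Sw ρ C a b = Sw ρ C a a + Sw ρ C (a+1) b := Sw_split ρ C hnn a a b le_rfl h
  have h2 : ρ (C b) ≤ Sw ρ C (a+1) b := mem_le_Sw ρ C hnn (a+1) b b (by omega) le_rfl
  rw [h1, Sw_single ρ C hnn]
  linarith

private lemma Tw_eq (a b : ℕ) (h : a < b) :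
    Tw ρ C a b = 2 * Sw ρ C a b - ρ (C a) - ρ (C b) := by
  have key : ∀ i ∈ Finset.Icc a b,
      (if i = a ∨ i = b then (1:ℝ) else 2) * ρ (C i)
        = 2 * ρ (C i) - ((if i = a then ρ (C a) else 0) + (if i = b then ρ (C b) else 0)) := by
    intro i hi
    rcases eq_or_ne i a with rfl | hia
    · simp [Nat.ne_of_lt h]
      ring
    · rcases eq_or_ne i b with rfl | hib
      · simp [hia]
        ring
      · simp [hia, hib]
  rw [Tw, Finset.sum_congr rfl key, Finset.sum_sub_distrib, Finset.sum_add_distrib]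
  rw [Finset.sum_ite_eq' (Finset.Icc a b) a (fun _ => ρ (C a)),
      Finset.sum_ite_eq' (Finset.Icc a b) b (fun _ => ρ (C b))]
  simp only [Finset.mem_Icc, le_refl, h.le, true_and, and_true, if_pos, Nat.le_of_lt h]
  rw [Sw, Finset.mul_sum]
  ring

private lemma Sw_le_Tw (a b : ℕ) (h : a < b) : Sw ρ C a b ≤ Tw ρ C a b := by
  have := Tw_eq ρ C hnn a b h
  have := pair_le_Sw ρ C hnn a b h
  linarith

private lemma mem_le_Tw (a b i : ℕ) (h : a < b) (h1 : a ≤ i) (h2 : i ≤ b) :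
    ρ (C i) ≤ Tw ρ C a b :=
  le_trans (mem_le_Sw ρ C hnn a b i h1 h2) (Sw_le_Tw ρ C hnn a b h)

private lemma Tw_overlap (a k b : ℕ) (h1 : a < k) (h2 : k < b) :
    Tw ρ C a k + Tw ρ C k b = Tw ρ C a b := by
  have e1 := Tw_eq ρ C hnn a k h1
  have e2 := Tw_eq ρ C hnn k b h2
  have e3 := Tw_eq ρ C hnn a b (h1.trans h2)
  have s1 : Sw ρ C a b = Sw ρ C a k + Sw ρ C (k+1) b :=
    Sw_split ρ C hnn a k b h1.le h2
  have s2 : Sw ρ C k b = Sw ρ C k k + Sw ρ C (k+1) b :=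
    Sw_split ρ C hnn k k b le_rfl h2
  rw [Sw_single ρ C hnn] at s2
  linarith

private lemma Tw_tail (a b : ℕ) (h : a + 1 < b) :
    Tw ρ C (a+1) b = Tw ρ C a b - ρ (C a) - ρ (C (a+1)) := by
  have e1 := Tw_eq ρ C hnn (a+1) b h
  have e2 := Tw_eq ρ C hnn a b (by omega)
  have s1 : Sw ρ C a b = Sw ρ C a a + Sw ρ C (a+1) b :=
    Sw_split ρ C hnn a a b le_rfl (by omega)
  rw [Sw_single ρ C hnn] at s1
  linarith

private lemma frink_aux
    (hmono : ∀ A B : Set Y, IsContinuum A → IsContinuum B → A ⊆ B → ρ A ≤ ρ B)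
    (htri : ∀ A B : Set Y, IsContinuum A → IsContinuum B →
      ¬A.Subsingleton → ¬B.Subsingleton → IsContinuum (A ∪ B) →
      ρ (A ∪ B) ≤ 2 * max (ρ A) (ρ B)) :
    ∀ m a b, b - a ≤ m → a ≤ b →
      (∀ i, a ≤ i → i ≤ b → IsContinuum (C i)) →
      (∀ i, a ≤ i → i < b → (C i ∩ C (i+1)).Nonempty) →
      ρ (⋃ i ∈ Finset.Icc a b, C i) ≤ 2 * Tw ρ C a b := by
  intro m
  induction m with
  | zero =>
      intro a b h1 h2 hc _
      have hba : b = a := by omega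
      rw [hba, biUnion_single', Tw_single ρ C hnn]
      linarith [hnn (C a)]
  | succ m ih =>
      intro a b hm hab hc hch
      -- trivial interval
      by_cases hba : b = a
      · rw [hba, biUnion_single', Tw_single ρ C hnn]
        linarith [hnn (C a)]
      -- helper facts for splitting
      have hcontL : ∀ j, a ≤ j → j ≤ b → IsContinuum (⋃ i ∈ Finset.Icc a j, C i) := by
        intro j hj1 hj2
        exact union_cont' C a j hj1 (fun i u v => hc i u (by omega))
          (fun i u v => hch i u (by omega))
      have hcontR : ∀ j, a ≤ j → j ≤ b → IsContinuum (⋃ i ∈ Finset.Icc j b, C i) := by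
        intro j hj1 hj2
        exact union_cont' C j b hj2 (fun i u v => hc i (by omega) v)
          (fun i u v => hch i (by omega) v)
      have hmeet : ∀ j, a ≤ j → j < b →
          ((⋃ i ∈ Finset.Icc a j, C i) ∩ ⋃ i ∈ Finset.Icc (j+1) b, C i).Nonempty := by
        intro j hj1 hj2
        obtain ⟨x, hx1, hx2⟩ := hch j hj1 hj2
        exact ⟨x, Set.mem_biUnion (Finset.mem_Icc.mpr (by omega)) hx1,
          Set.mem_biUnion (Finset.mem_Icc.mpr (by omega)) hx2⟩
      -- main split combinator: if both halves are ≤ Tw a b, done.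
      have combine : ∀ j, a ≤ j → j < b →
          ρ (⋃ i ∈ Finset.Icc a j, C i) ≤ Tw ρ C a b →
          ρ (⋃ i ∈ Finset.Icc (j+1) b, C i) ≤ Tw ρ C a b →
          ρ (⋃ i ∈ Finset.Icc a b, C i) ≤ 2 * Tw ρ C a b := by
        intro j hj1 hj2 hL hR
        rw [biUnion_split' C a j b hj1 hj2]
        calc ρ ((⋃ i ∈ Finset.Icc a j, C i) ∪ ⋃ i ∈ Finset.Icc (j+1) b, C i)
            ≤ 2 * max (ρ (⋃ i ∈ Finset.Icc a j, C i)) (ρ (⋃ i ∈ Finset.Icc (j+1) b, C i)) :=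
              two_tri ρ hnn htri _ _ (hcontL j hj1 hj2.le)
                (hcontR (j+1) (by omega) (by omega)) (hmeet j hj1 hj2)
          _ ≤ 2 * Tw ρ C a b := by
              have := max_le hL hR
              linarith
      have hab' : a < b := by omega
      by_cases hA : 2 * ρ (C a) > Tw ρ C a b
      · -- case A : first continuum dominates; split off C a
        by_cases hb1 : b = a + 1
        · subst hb1
          apply combine a le_rfl (by omega)
          · rw [biUnion_single']
            exact mem_le_Tw ρ C hnn a (a+1) a (by omega) le_rfl (by omega)
          · rw [biUnion_single']
            exact mem_le_Tw ρ C hnn a (a+1) (a+1) (by omega) (by omega) le_rfl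
        · have hb2 : a + 1 < b := by omega
          apply combine a le_rfl (by omega)
          · rw [biUnion_single']
            exact mem_le_Tw ρ C hnn a b a hab' le_rfl hab'.le
          · have hR : ρ (⋃ i ∈ Finset.Icc (a+1) b, C i) ≤ 2 * Tw ρ C (a+1) b :=
              ih (a+1) b (by omega) (by omega) (fun i u v => hc i (by omega) v)
                (fun i u v => hch i (by omega) v)
            have htail := Tw_tail ρ C hnn a b hb2
            have h1 := hnn (C (a+1))
            linarith
      · -- case B
        push_neg at hA
        classical
        set P : ℕ → Prop := fun j => 2 * Tw ρ C a j ≤ Tw ρ C a b with hP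
        have hPa : P a := by
          rw [hP]
          simpa [Tw_single ρ C hnn] using hA
        set j := Nat.findGreatest P (b - 1) with hj
        have hja : a ≤ j := Nat.le_findGreatest (by omega) hPa
        have hjb : j ≤ b - 1 := Nat.findGreatest_le (b-1)
        have hPj : P j := Nat.findGreatest_spec (m := a) (by omega) hPa
        have hLj : ρ (⋃ i ∈ Finset.Icc a j, C i) ≤ Tw ρ C a b := by
          have := ih a j (by omega) hja (fun i u v => hc i u (by omega))
            (fun i u v => hch i u (by omega))
          have hPj' : 2 * Tw ρ C a j ≤ Tw ρ C a b := hPj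
          linarith
        by_cases hjtop : j = b - 1
        · apply combine j hja (by omega)
          · exact hLj
          · have : j + 1 = b := by omega
            rw [this, biUnion_single']
            exact mem_le_Tw ρ C hnn a b b hab' hab'.le le_rfl
        · have hj1b : j + 1 ≤ b - 1 := by omega
          have hnPj1 : ¬ P (j+1) :=
            Nat.findGreatest_is_greatest (by omega) hj1b
          have hgt : Tw ρ C a b < 2 * Tw ρ C a (j+1) := by
            have := hnPj1
            simp only [hP, not_le] at this
            exact this
          have hov : Tw ρ C a (j+1) + Tw ρ C (j+1) b = Tw ρ C a b :=
            Tw_overlap ρ C hnn a (j+1) b (by omega) (by omega)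
          apply combine j hja (by omega)
          · exact hLj
          · have hR : ρ (⋃ i ∈ Finset.Icc (j+1) b, C i) ≤ 2 * Tw ρ C (j+1) b :=
              ih (j+1) b (by omega) (by omega) (fun i u v => hc i (by omega) v)
                (fun i u v => hch i (by omega) v)
            linarith

end FrinkAux
/-- Frink-type chain inequality for a monotone, weakly-subadditive function on continua. -/
theorem stmt0 {X : Type*} [MetricSpace X] [CompactSpace X]
    (ρ : Set X → ℝ) (hnn : ∀ A : Set X, 0 ≤ ρ A)
    (hmono : ∀ A B : Set X, IsContinuum A → IsContinuum B → A ⊆ B → ρ A ≤ ρ B)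
    (htri : ∀ A B : Set X, IsContinuum A → IsContinuum B →
      ¬A.Subsingleton → ¬B.Subsingleton → IsContinuum (A ∪ B) →
      ρ (A ∪ B) ≤ 2 * max (ρ A) (ρ B))
    (n : ℕ) (hn : 1 ≤ n) (C : Fin n → Set X)
    (hC : ∀ i, IsContinuum (C i))
    (hchain : ∀ i : Fin n, ∀ h : (i : ℕ) + 1 < n, (C i ∩ C ⟨(i : ℕ) + 1, h⟩).Nonempty) :
    ρ (⋃ i, C i) ≤
      ∑ i : Fin n, (if (i : ℕ) = 0 ∨ (i : ℕ) = n - 1 then 2 else 4) * ρ (C i) := by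
  have hn' : 0 < n := hn
  set D : ℕ → Set X := fun i => C ⟨i % n, Nat.mod_lt i hn'⟩ with hD
  have hDC : ∀ (i : ℕ) (h : i < n), D i = C ⟨i, h⟩ := by
    intro i h
    show C ⟨i % n, Nat.mod_lt i hn'⟩ = C ⟨i, h⟩
    have hfin : (⟨i % n, Nat.mod_lt i hn'⟩ : Fin n) = ⟨i, h⟩ := by
      apply Fin.ext
      simp [Nat.mod_eq_of_lt h]
    rw [hfin]
  have hc : ∀ i, 0 ≤ i → i ≤ n - 1 → IsContinuum (D i) := by
    intro i _ hi
    rw [hDC i (by omega)]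
    exact hC _
  have hch : ∀ i, 0 ≤ i → i < n - 1 → (D i ∩ D (i+1)).Nonempty := by
    intro i _ hi
    rw [hDC i (by omega), hDC (i+1) (by omega)]
    exact hchain ⟨i, by omega⟩ (show i + 1 < n by omega)
  have key := frink_aux ρ D hnn hmono htri (n-1) 0 (n-1) (by omega) (by omega) hc hch
  have hU : (⋃ i, C i) = ⋃ i ∈ Finset.Icc 0 (n-1), D i := by
    ext x
    simp only [Set.mem_iUnion, Finset.mem_Icc, exists_prop]
    constructor
    · rintro ⟨i, hx⟩
      refine ⟨(i : ℕ), ⟨by omega, by have := i.isLt; omega⟩, ?_⟩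
      rw [hDC (i : ℕ) i.isLt]
      simpa using hx
    · rintro ⟨i, ⟨_, hi⟩, hx⟩
      rw [hDC i (by omega)] at hx
      exact ⟨_, hx⟩
  have hSum : ∑ i : Fin n, (if (i : ℕ) = 0 ∨ (i : ℕ) = n - 1 then (2:ℝ) else 4) * ρ (C i)
      = 2 * Tw ρ D 0 (n-1) := by
    rw [Tw, Finset.mul_sum]
    have hrange : Finset.Icc 0 (n-1) = Finset.range n := by
      ext i; simp [Finset.mem_Icc, Finset.mem_range]; omega
    rw [hrange, ← Fin.sum_univ_eq_sum_range
      (fun i => 2 * ((if i = 0 ∨ i = n - 1 then (1:ℝ) else 2) * ρ (D i))) n]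
    apply Finset.sum_congr rfl
    intro i _
    rw [hDC (i : ℕ) i.isLt]
    have : (⟨(i : ℕ), i.isLt⟩ : Fin n) = i := Fin.ext rfl
    rw [this]
    split <;> ring
  rw [hU, hSum]
  exact key
end

section
/- Let λ ∈ (0,1), m ∈ ℕ with λ^m = 1/2, and let N : C(X) → ℕ ∪ {∞} assign to each nontrivial continuum C the minimal |n| such that diam(fⁿ(C)) > ε, where ε is a cw-expansivity constant of a cw-expansive homeomorphism f. Define ρ(C) = λ^{N(C)} for nontrivial C and ρ({p}) = 0. Suppose that whenever diam(C) > ε/2 one has N(C) ≤ m. Then for any nontrivial continua A, B with A ∪ B a continuum (A ∩ B ≠ ∅), ρ(A ∪ B) ≤ 2·max(ρ(A), ρ(B)). -/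
open Metric Set

variable {X : Type*} [MetricSpace X]

lemma zIter_eq_zpow (f : X ≃ₜ X) (n : ℤ) (x : X) :
    zIter f n x = (f.toEquiv ^ n) x := by
  unfold zIter
  split_ifs with h
  · obtain ⟨k, rfl⟩ := Int.eq_ofNat_of_zero_le h
    simp only [zpow_natCast, ← Equiv.Perm.coe_pow]; rfl
  · push_neg at h
    obtain ⟨k, hk⟩ : ∃ k : ℕ, n = -k := ⟨(-n).toNat, by omega⟩
    subst hk
    have : f.toEquiv ^ (-(k:ℤ)) = (f.toEquiv⁻¹) ^ k := by
      rw [zpow_neg, zpow_natCast, ← inv_pow]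
    rw [this]
    have hsymm : ⇑f.symm = ⇑(f.toEquiv⁻¹) := rfl
    simp only [hsymm, ← Equiv.Perm.coe_pow]
    norm_num

lemma zIter_comp (f : X ≃ₜ X) (a b : ℤ) (x : X) :
    zIter f a (zIter f b x) = zIter f (a + b) x := by
  simp only [zIter_eq_zpow, ← Equiv.Perm.mul_apply, ← zpow_add]

lemma zIter_continuous (f : X ≃ₜ X) (n : ℤ) : Continuous (zIter f n) := by
  unfold zIter
  split_ifs
  · exact f.continuous.iterate _
  · exact f.symm.continuous.iterate _

lemma pow_decay {lam : ℝ} (h0 : 0 ≤ lam) (h1 : lam ≤ 1) {a b : ℕ} (h : a ≤ b) :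
    lam ^ b ≤ lam ^ a := pow_le_pow_of_le_one h0 h1 h

/-- The function ρ = λ^{N(·)} satisfies ρ(A ∪ B) ≤ 2·max(ρ(A), ρ(B)). -/
theorem stmt1 {X : Type*} [MetricSpace X] [CompactSpace X]
    (f : X ≃ₜ X) (ε : ℝ) (hf : CwExpansiveWith f ε)
    (lam : ℝ) (hlam0 : 0 < lam) (hlam1 : lam < 1)
    (m : ℕ) (hm0 : 0 < m) (hlamm : lam ^ m = 1 / 2)
    (N : Set X → ℕ)
    (hN : ∀ C : Set X, IsContinuum C → ¬C.Subsingleton →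
      (∃ n : ℤ, n.natAbs = N C ∧ ε < Metric.diam (zIter f n '' C)) ∧
      (∀ n : ℤ, n.natAbs < N C → Metric.diam (zIter f n '' C) ≤ ε))
    (hm : ∀ C : Set X, IsContinuum C → ¬C.Subsingleton →
      ε / 2 < Metric.diam C → N C ≤ m)
    (ρ : Set X → ℝ)
    (hρ : ∀ C : Set X, IsContinuum C →
      (¬C.Subsingleton → ρ C = lam ^ N C) ∧ (C.Subsingleton → ρ C = 0))
    (A B : Set X) (hA : IsContinuum A) (hB : IsContinuum B)
    (hAnt : ¬A.Subsingleton) (hBnt : ¬B.Subsingleton)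
    (hAB : (A ∩ B).Nonempty) :
    ρ (A ∪ B) ≤ 2 * max (ρ A) (ρ B) := by
  have hε : 0 < ε := hf.1
  -- key helper: if some iterate of a continuum C has diameter > ε/2, then N C ≤ |n| + m
  have key : ∀ C : Set X, IsContinuum C → ¬C.Subsingleton → ∀ n : ℤ,
      ε / 2 < Metric.diam (zIter f n '' C) → N C ≤ n.natAbs + m := by
    intro C hC hCnt n hd
    set D := zIter f n '' C with hD
    have hDc : IsContinuum D :=
      ⟨hC.1.image (zIter_continuous f n), hC.2.image _ ((zIter_continuous f n).continuousOn)⟩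
    have hDnt : ¬D.Subsingleton := by
      intro h
      have := Metric.diam_subsingleton h
      rw [this] at hd; linarith
    have hND : N D ≤ m := hm D hDc hDnt hd
    obtain ⟨k, hk, hkd⟩ := (hN D hDc hDnt).1
    have himg : zIter f k '' D = zIter f (k + n) '' C := by
      rw [hD, Set.image_image]
      apply Set.image_congr
      intro x _
      exact zIter_comp f k n x
    rw [himg] at hkd
    by_contra hlt
    push_neg at hlt
    have habs : (k + n).natAbs < N C := by
      have := Int.natAbs_add_le k n
      omega
    exact absurd ((hN C hC hCnt).2 (k + n) habs) (not_le.mpr hkd)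
  -- the union is a continuum, not a subsingleton
  have hU : IsContinuum (A ∪ B) := ⟨hA.1.union hB.1, hA.2.union hAB hB.2⟩
  have hUnt : ¬(A ∪ B).Subsingleton := fun h => hAnt (h.anti Set.subset_union_left)
  -- get witness n for N (A ∪ B)
  obtain ⟨n, hn, hnd⟩ := (hN (A ∪ B) hU hUnt).1
  have himgU : zIter f n '' (A ∪ B) = zIter f n '' A ∪ zIter f n '' B :=
    Set.image_union _ _ _
  have hinter : ((zIter f n '' A) ∩ (zIter f n '' B)).Nonempty := by
    obtain ⟨x, hxA, hxB⟩ := hAB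
    exact ⟨zIter f n x, Set.mem_image_of_mem _ hxA, Set.mem_image_of_mem _ hxB⟩
  have hsum : ε < Metric.diam (zIter f n '' A) + Metric.diam (zIter f n '' B) := by
    calc ε < Metric.diam (zIter f n '' (A ∪ B)) := hnd
    _ ≤ _ := by rw [himgU]; exact Metric.diam_union' hinter
  -- one of the two has diameter > ε/2, giving min (N A) (N B) ≤ N (A ∪ B) + m
  have hmin : min (N A) (N B) ≤ N (A ∪ B) + m := by
    rcases lt_or_ge (ε / 2) (Metric.diam (zIter f n '' A)) with h | h
    · have := key A hA hAnt n h
      omega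
    · have hB2 : ε / 2 < Metric.diam (zIter f n '' B) := by linarith
      have := key B hB hBnt n hB2
      omega
  -- rewrite ρ values
  rw [((hρ (A ∪ B) hU).1 hUnt), ((hρ A hA).1 hAnt), ((hρ B hB).1 hBnt)]
  have hlm : lam ^ (min (N A) (N B)) ≤ max (lam ^ N A) (lam ^ N B) := by
    rcases min_cases (N A) (N B) with ⟨h1, _⟩ | ⟨h1, _⟩ <;> rw [h1]
    · exact le_max_left _ _
    · exact le_max_right _ _
  have hstep : lam ^ (N (A ∪ B) + m) ≤ lam ^ (min (N A) (N B)) :=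
    pow_decay hlam0.le hlam1.le hmin
  rw [pow_add, hlamm] at hstep
  calc lam ^ N (A ∪ B) = 2 * (lam ^ N (A ∪ B) * (1 / 2)) := by ring
    _ ≤ 2 * lam ^ (min (N A) (N B)) := by linarith
    _ ≤ 2 * max (lam ^ N A) (lam ^ N B) := by linarith
end

section
/- Let f : X → X and g : Y → Y be homeomorphisms of compact metric spaces, and equip X × Y with the maximum metric. If f and g satisfy the cw-local-product-structure, then so does f × g. In particular, if f and g are cw-hyperbolic then f × g is cw-hyperbolic. -/
open Metric Set

variable {X : Type*} [MetricSpace X]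

section Aux

variable {Y : Type*} [MetricSpace Y] (f : X ≃ₜ X) (g : Y ≃ₜ Y)

lemma prod_iter (n : ℕ) (p : X × Y) :
    (⇑(f.prodCongr g))^[n] p = ((⇑f)^[n] p.1, (⇑g)^[n] p.2) := by
  have : ⇑(f.prodCongr g) = Prod.map ⇑f ⇑g := rfl
  rw [this, Prod.map_iterate]; rfl

lemma prod_symm : (f.prodCongr g).symm = f.symm.prodCongr g.symm := rfl

lemma ws_prod {ε : ℝ} {x₁ y₁ : X} {x₂ y₂ : Y} (h₁ : y₁ ∈ Ws f ε x₁) (h₂ : y₂ ∈ Ws g ε x₂) :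
    (y₁, y₂) ∈ Ws (f.prodCongr g) ε (x₁, x₂) := by
  intro n
  rw [prod_iter, prod_iter, Prod.dist_eq]
  exact max_le (h₁ n) (h₂ n)

lemma wu_prod {ε : ℝ} {x₁ y₁ : X} {x₂ y₂ : Y} (h₁ : y₁ ∈ Wu f ε x₁) (h₂ : y₂ ∈ Wu g ε x₂) :
    (y₁, y₂) ∈ Wu (f.prodCongr g) ε (x₁, x₂) := by
  intro n
  rw [prod_symm, prod_iter, prod_iter, Prod.dist_eq]
  exact max_le (h₁ n) (h₂ n)

lemma mem_ws_self {ε : ℝ} (hε : 0 ≤ ε) (x : X) : x ∈ Ws f ε x := by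
  intro n; simp [hε]

lemma mem_wu_self {ε : ℝ} (hε : 0 ≤ ε) (x : X) : x ∈ Wu f ε x := by
  intro n; simp [hε]

lemma cs_prod {ε : ℝ} (hε : 0 ≤ ε) (x₁ : X) (x₂ : Y) :
    Cs f ε x₁ ×ˢ Cs g ε x₂ ⊆ Cs (f.prodCongr g) ε (x₁, x₂) := by
  apply IsPreconnected.subset_connectedComponentIn
  · exact (isPreconnected_connectedComponentIn.prod isPreconnected_connectedComponentIn)
  · exact mem_prod.2 ⟨mem_connectedComponentIn (mem_ws_self f hε x₁),
      mem_connectedComponentIn (mem_ws_self g hε x₂)⟩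
  · rintro ⟨a, b⟩ ⟨ha, hb⟩
    exact ws_prod f g (connectedComponentIn_subset _ _ ha) (connectedComponentIn_subset _ _ hb)

lemma cu_prod {ε : ℝ} (hε : 0 ≤ ε) (x₁ : X) (x₂ : Y) :
    Cu f ε x₁ ×ˢ Cu g ε x₂ ⊆ Cu (f.prodCongr g) ε (x₁, x₂) := by
  apply IsPreconnected.subset_connectedComponentIn
  · exact (isPreconnected_connectedComponentIn.prod isPreconnected_connectedComponentIn)
  · exact mem_prod.2 ⟨mem_connectedComponentIn (mem_wu_self f hε x₁),
      mem_connectedComponentIn (mem_wu_self g hε x₂)⟩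
  · rintro ⟨a, b⟩ ⟨ha, hb⟩
    exact wu_prod f g (connectedComponentIn_subset _ _ ha) (connectedComponentIn_subset _ _ hb)

lemma cwlps_prod (hf : CwLPS f) (hg : CwLPS g) : CwLPS (f.prodCongr g) := by
  intro ε hε
  obtain ⟨δ₁, hδ₁, H₁⟩ := hf ε hε
  obtain ⟨δ₂, hδ₂, H₂⟩ := hg ε hε
  refine ⟨min δ₁ δ₂, lt_min hδ₁ hδ₂, ?_⟩
  rintro ⟨x₁, x₂⟩ ⟨y₁, y₂⟩ hd
  rw [Prod.dist_eq] at hd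
  obtain ⟨z₁, hz₁u, hz₁s⟩ := H₁ x₁ y₁ (lt_of_le_of_lt (le_max_left _ _) (lt_of_lt_of_le hd (min_le_left _ _)))
  obtain ⟨z₂, hz₂u, hz₂s⟩ := H₂ x₂ y₂ (lt_of_le_of_lt (le_max_right _ _) (lt_of_lt_of_le hd (min_le_right _ _)))
  exact ⟨(z₁, z₂), cu_prod f g hε.le x₁ x₂ ⟨hz₁u, hz₂u⟩, cs_prod f g hε.le y₁ y₂ ⟨hz₁s, hz₂s⟩⟩

lemma zIter_cont (n : ℤ) : Continuous (zIter f n) := by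
  unfold zIter
  split
  · exact f.continuous.iterate _
  · exact f.symm.continuous.iterate _

lemma zIter_prod (n : ℤ) (p : X × Y) :
    zIter (f.prodCongr g) n p = (zIter f n p.1, zIter g n p.2) := by
  unfold zIter
  split
  · rw [prod_iter]
  · rw [prod_symm, prod_iter]

lemma cwexp_prod (hf : CwExpansive f) (hg : CwExpansive g) : CwExpansive (f.prodCongr g) := by
  obtain ⟨c₁, hc₁, H₁⟩ := hf
  obtain ⟨c₂, hc₂, H₂⟩ := hg
  refine ⟨min c₁ c₂, lt_min hc₁ hc₂, ?_⟩
  intro C ⟨hCc, hCconn⟩ hdiam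
  have hb : ∀ n : ℤ, Bornology.IsBounded (zIter (f.prodCongr g) n '' C) := fun n =>
    ((hCc.image (zIter_cont _ n)).isBounded)
  have key : ∀ n : ℤ, ∀ p ∈ C, ∀ q ∈ C,
      dist (zIter f n p.1) (zIter f n q.1) ≤ c₁ ∧ dist (zIter g n p.2) (zIter g n q.2) ≤ c₂ := by
    intro n p hp q hq
    have hd : dist (zIter (f.prodCongr g) n p) (zIter (f.prodCongr g) n q) ≤ min c₁ c₂ :=
      le_trans (dist_le_diam_of_mem (hb n) (mem_image_of_mem _ hp) (mem_image_of_mem _ hq))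
        (hdiam n)
    rw [zIter_prod, zIter_prod, Prod.dist_eq] at hd
    constructor
    · exact le_trans (le_trans (le_max_left _ _) hd) (min_le_left _ _)
    · exact le_trans (le_trans (le_max_right _ _) hd) (min_le_right _ _)
  have h1 : (Prod.fst '' C).Subsingleton := by
    apply H₁
    · exact ⟨hCc.image continuous_fst, hCconn.image _ continuous_fst.continuousOn⟩
    · intro n
      rw [show zIter f n '' (Prod.fst '' C) = (fun p : X × Y => zIter f n p.1) '' C by
        rw [image_image]]
      apply diam_le_of_forall_dist_le hc₁.le
      rintro _ ⟨p, hp, rfl⟩ _ ⟨q, hq, rfl⟩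
      exact (key n p hp q hq).1
  have h2 : (Prod.snd '' C).Subsingleton := by
    apply H₂
    · exact ⟨hCc.image continuous_snd, hCconn.image _ continuous_snd.continuousOn⟩
    · intro n
      rw [show zIter g n '' (Prod.snd '' C) = (fun p : X × Y => zIter g n p.2) '' C by
        rw [image_image]]
      apply diam_le_of_forall_dist_le hc₂.le
      rintro _ ⟨p, hp, rfl⟩ _ ⟨q, hq, rfl⟩
      exact (key n p hp q hq).2
  intro p hp q hq
  exact Prod.ext (h1 (mem_image_of_mem _ hp) (mem_image_of_mem _ hq))
    (h2 (mem_image_of_mem _ hp) (mem_image_of_mem _ hq))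

end Aux

/-- The product of homeomorphisms with the cw-local-product-structure has it too;
in particular the product of cw-hyperbolic homeomorphisms is cw-hyperbolic. -/
theorem stmt4 {X Y : Type*} [MetricSpace X] [CompactSpace X] [MetricSpace Y] [CompactSpace Y]
    (f : X ≃ₜ X) (g : Y ≃ₜ Y) :
    (CwLPS f → CwLPS g → CwLPS (f.prodCongr g)) ∧
    (CwHyperbolic f → CwHyperbolic g → CwHyperbolic (f.prodCongr g)) := by
  refine ⟨cwlps_prod f g, ?_⟩
  rintro ⟨hfe, hfl⟩ ⟨hge, hgl⟩
  exact ⟨cwexp_prod f g hfe hge, cwlps_prod f g hfl hgl⟩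
end

section
/- If a homeomorphism f of a compact metric space is cwN-hyperbolic, then for every k ∈ ℕ the set of periodic points of f with period k is finite. -/
open Metric Set

variable {X : Type*} [MetricSpace X]

/-! ### Auxiliary lemmas -/

namespace CwAux

lemma mem_ws_self (f : X ≃ₜ X) {ε : ℝ} (hε : 0 ≤ ε) (x : X) : x ∈ Ws f ε x := by
  intro n; simp [hε]

lemma ws_mono (f : X ≃ₜ X) {ε ε' : ℝ} (h : ε ≤ ε') (x : X) : Ws f ε x ⊆ Ws f ε' x :=
  fun _y hy n => (hy n).trans h

lemma cs_subset_ws (f : X ≃ₜ X) (ε : ℝ) (x : X) : Cs f ε x ⊆ Ws f ε x :=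
  connectedComponentIn_subset _ _

lemma mem_cs_self (f : X ≃ₜ X) {ε : ℝ} (hε : 0 ≤ ε) (x : X) : x ∈ Cs f ε x :=
  mem_connectedComponentIn (mem_ws_self f hε x)

lemma cs_mono (f : X ≃ₜ X) {ε ε' : ℝ} (h : ε ≤ ε') (x : X) : Cs f ε x ⊆ Cs f ε' x :=
  connectedComponentIn_mono x (ws_mono f h x)

lemma isClosed_ws (f : X ≃ₜ X) (ε : ℝ) (x : X) : IsClosed (Ws f ε x) := by
  have : Ws f ε x = ⋂ n : ℕ, {y | dist ((⇑f)^[n] x) ((⇑f)^[n] y) ≤ ε} := by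
    ext y; simp [Ws]
  rw [this]
  exact isClosed_iInter fun n =>
    isClosed_le (Continuous.dist continuous_const (f.continuous.iterate n)) continuous_const

lemma isPreconnected_cs (f : X ≃ₜ X) (ε : ℝ) (x : X) : IsPreconnected (Cs f ε x) :=
  isPreconnected_connectedComponentIn

lemma isCompact_cs [CompactSpace X] (f : X ≃ₜ X) (ε : ℝ) (x : X) : IsCompact (Cs f ε x) := by
  have hWs : IsCompact (Ws f ε x) := (isClosed_ws f ε x).isCompact
  by_cases hx : x ∈ Ws f ε x
  · rw [Cs, connectedComponentIn_eq_image hx]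
    haveI : CompactSpace (Ws f ε x) := isCompact_iff_compactSpace.mp hWs
    exact (isClosed_connectedComponent.isCompact).image continuous_subtype_val
  · rw [Cs, connectedComponentIn_eq_empty hx]
    exact isCompact_empty

/-- `Wu f = Ws f.symm` definitionally. -/
lemma wu_eq_ws_symm (f : X ≃ₜ X) (ε : ℝ) (x : X) : Wu f ε x = Ws f.symm ε x := rfl

lemma cu_eq_cs_symm (f : X ≃ₜ X) (ε : ℝ) (x : X) : Cu f ε x = Cs f.symm ε x := rfl

lemma zIter_symm (f : X ≃ₜ X) (n : ℤ) : zIter f.symm n = zIter f (-n) := by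
  funext x
  unfold zIter
  rcases lt_trichotomy n 0 with h | h | h
  · rw [if_neg (not_le.mpr h), if_pos (by omega), Homeomorph.symm_symm]
  · subst h; simp
  · rw [if_pos h.le, if_neg (by omega), neg_neg]

lemma cwExpansiveWith_symm {f : X ≃ₜ X} {c : ℝ} (h : CwExpansiveWith f c) :
    CwExpansiveWith f.symm c := by
  refine ⟨h.1, fun C hC hd => h.2 C hC fun n => ?_⟩
  have := hd (-n)
  rwa [zIter_symm, neg_neg] at this

lemma symm_iterate_fixed {f : X ≃ₜ X} {k : ℕ} {p : X} (hp : (⇑f)^[k] p = p) :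
    (⇑f.symm)^[k] p = p := by
  have hli : Function.LeftInverse ⇑f.symm ⇑f := f.symm_apply_apply
  conv_lhs => rw [← hp]
  exact (hli.iterate k) p

/-- Forward invariance of the local stable continuum of a `k`-periodic point. -/
lemma cs_fwd_step (f : X ≃ₜ X) {ε : ℝ} (hε : 0 < ε) {k : ℕ} {q : X}
    (hq : (⇑f)^[k] q = q) : (⇑f)^[k] '' (Cs f ε q) ⊆ Cs f ε q := by
  have himg : (⇑f)^[k] '' (Cs f ε q) ⊆ Ws f ε q := by
    rintro _ ⟨a, ha, rfl⟩
    intro n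
    have h1 : (⇑f)^[n] ((⇑f)^[k] a) = (⇑f)^[n + k] a := (Function.iterate_add_apply _ n k a).symm
    have h2 : (⇑f)^[n] q = (⇑f)^[n + k] q := by
      conv_lhs => rw [← hq]
      exact (Function.iterate_add_apply _ n k q).symm
    rw [h1, h2]
    exact (cs_subset_ws f ε q ha) (n + k)
  refine IsPreconnected.subset_connectedComponentIn ?_ ?_ himg
  · exact (isPreconnected_cs f ε q).image _ ((f.continuous.iterate k)).continuousOn
  · exact ⟨q, mem_cs_self f hε.le q, hq⟩

/-- The key backwards step for local unstable continua of a periodic point,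
stated for a general homeomorphism `g` in "stable" language, using `g.symm`. -/
lemma cs_inv_step (g : X ≃ₜ X) {R' R : ℝ} (hR' : 0 < R') (hR'R : R' ≤ R) {k : ℕ} {p : X}
    (hp : (⇑g.symm)^[k] p = p)
    (hmod : ∀ x y : X, dist x y ≤ R' → ∀ j ≤ k, dist ((⇑g.symm)^[j] x) ((⇑g.symm)^[j] y) ≤ R) :
    (⇑g.symm)^[k] '' (Cs g R' p) ⊆ Cs g R p := by
  have hli : Function.LeftInverse ⇑g ⇑g.symm := g.apply_symm_apply
  have hcancel : ∀ (n : ℕ) (a : X), (⇑g)^[n] ((⇑g.symm)^[k] a) =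
      if k ≤ n then (⇑g)^[n - k] a else (⇑g.symm)^[k - n] a := by
    intro n a
    split_ifs with h
    · have h1 : (⇑g)^[n] ((⇑g.symm)^[k] a) = (⇑g)^[n - k] ((⇑g)^[k] ((⇑g.symm)^[k] a)) := by
        rw [← Function.iterate_add_apply]; congr 1; omega
      rw [h1, (hli.iterate k) a]
    · push_neg at h
      have h1 : (⇑g.symm)^[k] a = (⇑g.symm)^[n] ((⇑g.symm)^[k - n] a) := by
        rw [← Function.iterate_add_apply]; congr 1; omega
      rw [h1, (hli.iterate n) ((⇑g.symm)^[k - n] a)]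
  have himg : (⇑g.symm)^[k] '' (Cs g R' p) ⊆ Ws g R p := by
    rintro _ ⟨a, ha, rfl⟩
    intro n
    have haws := cs_subset_ws g R' p ha
    rcases le_or_gt k n with h | h
    · have e1 : (⇑g)^[n] ((⇑g.symm)^[k] a) = (⇑g)^[n - k] a := by
        rw [hcancel n a, if_pos h]
      have e2 : (⇑g)^[n] p = (⇑g)^[n - k] p := by
        conv_lhs => rw [← hp]
        rw [hcancel n p, if_pos h]
      rw [e1, e2]
      exact (haws (n - k)).trans hR'R
    · have e1 : (⇑g)^[n] ((⇑g.symm)^[k] a) = (⇑g.symm)^[k - n] a := by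
        rw [hcancel n a, if_neg (not_le.mpr h)]
      have e2 : (⇑g)^[n] p = (⇑g.symm)^[k - n] p := by
        conv_lhs => rw [← hp]
        rw [hcancel n p, if_neg (not_le.mpr h)]
      rw [e1, e2]
      have hd : dist p a ≤ R' := by simpa using haws 0
      exact hmod p a hd (k - n) (by omega)
  refine IsPreconnected.subset_connectedComponentIn ?_ ?_ himg
  · exact (isPreconnected_cs g R' p).image _ ((g.symm.continuous.iterate k)).continuousOn
  · exact ⟨p, mem_cs_self g hR'.le p, hp⟩

/-- A decreasing intersection of compact preconnected sets is preconnected. -/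
lemma isPreconnected_iInter_nested {S : ℕ → Set X} (hnest : ∀ m, S (m + 1) ⊆ S m)
    (hcp : ∀ m, IsCompact (S m)) (hcn : ∀ m, IsPreconnected (S m)) :
    IsPreconnected (⋂ m, S m) := by
  have hanti : Antitone S := antitone_nat_of_succ_le hnest
  have hcl : IsClosed (⋂ m, S m) := isClosed_iInter fun m => (hcp m).isClosed
  rw [isPreconnected_iff_subset_of_fully_disjoint_closed hcl]
  intro u v hu hv hcov hdis
  obtain ⟨U, V, hU, hV, huU, hvV, hUV⟩ := normal_separation hu hv hdis
  have hexists : ∃ m, S m ⊆ U ∪ V := by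
    by_contra hcon
    push_neg at hcon
    have hne : ∀ m, (S m ∩ (U ∪ V)ᶜ).Nonempty := by
      intro m
      rcases not_subset.mp (hcon m) with ⟨x, hx1, hx2⟩
      exact ⟨x, hx1, hx2⟩
    have hdir : Directed (· ⊇ ·) (fun m => S m ∩ (U ∪ V)ᶜ) := by
      intro a b
      exact ⟨max a b, inter_subset_inter_left _ (hanti (le_max_left a b)),
        inter_subset_inter_left _ (hanti (le_max_right a b))⟩
    have hclosed : ∀ m, IsClosed (S m ∩ (U ∪ V)ᶜ) := fun m =>
      (hcp m).isClosed.inter (hU.union hV).isClosed_compl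
    have hcomp : ∀ m, IsCompact (S m ∩ (U ∪ V)ᶜ) := fun m =>
      (hcp m).inter_right (hU.union hV).isClosed_compl
    obtain ⟨y, hy⟩ :=
      IsCompact.nonempty_iInter_of_directed_nonempty_isCompact_isClosed _ hdir hne hcomp hclosed
    simp only [mem_iInter, mem_inter_iff] at hy
    have hyΛ : y ∈ ⋂ m, S m := mem_iInter.mpr fun m => (hy m).1
    have : y ∈ U ∪ V := union_subset_union huU hvV (hcov hyΛ)
    exact (hy 0).2 this
  obtain ⟨m, hm⟩ := hexists
  have hor : S m ⊆ U ∨ S m ⊆ V := by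
    rcases (S m ∩ U).eq_empty_or_nonempty with h1 | h1
    · right; intro x hx
      rcases hm hx with h | h
      · exact absurd (mem_inter hx h) (by simp [h1])
      · exact h
    rcases (S m ∩ V).eq_empty_or_nonempty with h2 | h2
    · left; intro x hx
      rcases hm hx with h | h
      · exact h
      · exact absurd (mem_inter hx h) (by simp [h2])
    · exfalso
      obtain ⟨z, hz⟩ := (hcn m) U V hU hV hm h1 h2
      exact Set.disjoint_left.mp hUV hz.2.1 hz.2.2
  have hsub : (⋂ m', S m') ⊆ S m := iInter_subset _ m
  rcases hor with h | h
  · left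
    intro x hx
    rcases hcov hx with hxu | hxv
    · exact hxu
    · exact ((Set.disjoint_left.mp hUV (h (hsub hx)) (hvV hxv)).elim)
  · right
    intro x hx
    rcases hcov hx with hxu | hxv
    · exact ((Set.disjoint_right.mp hUV (h (hsub hx)) (huU hxu)).elim)
    · exact hxv

/-- Claim A: if `q` is periodic and `η` is a periodic point lying in the local stable
continuum of `q` (at small enough radius), then `η = q`. -/
lemma claimA [CompactSpace X] (f : X ≃ₜ X) {c ε : ℝ} (hexp : CwExpansiveWith f c)
    (hε : 0 < ε) (h2ε : 2 * ε ≤ c) {k : ℕ} (hk : 0 < k) {q η : X}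
    (hq : (⇑f)^[k] q = q) (hη : (⇑f)^[k] η = η) (hmem : η ∈ Cs f ε q) : η = q := by
  classical
  set S : ℕ → Set X := fun m => (⇑f)^[k * m] '' (Cs f ε q) with hS
  have hqfix : ∀ m : ℕ, (⇑f)^[k * m] q = q := by
    intro m
    rw [Function.iterate_mul]
    exact Function.iterate_fixed hq m
  have hηfix : ∀ m : ℕ, (⇑f)^[k * m] η = η := by
    intro m
    rw [Function.iterate_mul]
    exact Function.iterate_fixed hη m
  have hstep := cs_fwd_step f hε hq
  have hnest : ∀ m, S (m + 1) ⊆ S m := by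
    intro m
    have hkm : k * (m + 1) = k * m + k := by ring
    have h1 : (⇑f)^[k * (m + 1)] = (⇑f)^[k * m] ∘ (⇑f)^[k] := by
      rw [hkm, Function.iterate_add]
    simp only [hS, h1, Set.image_comp]
    exact Set.image_mono hstep
  have hsub0 : ∀ m, S m ⊆ Cs f ε q := by
    intro m
    induction m with
    | zero => simp [hS]
    | succ n ih => exact (hnest n).trans ih
  have hqS : ∀ m, q ∈ S m := fun m => ⟨q, mem_cs_self f hε.le q, hqfix m⟩
  have hηS : ∀ m, η ∈ S m := fun m => ⟨η, hmem, hηfix m⟩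
  have hScp : ∀ m, IsCompact (S m) :=
    fun m => (isCompact_cs f ε q).image (f.continuous.iterate _)
  have hScn : ∀ m, IsPreconnected (S m) :=
    fun m => (isPreconnected_cs f ε q).image _ ((f.continuous.iterate _)).continuousOn
  set Λ : Set X := ⋂ m, S m with hΛ
  have hqΛ : q ∈ Λ := mem_iInter.mpr hqS
  have hηΛ : η ∈ Λ := mem_iInter.mpr hηS
  have hΛWs : Λ ⊆ Ws f ε q := (iInter_subset S 0).trans ((hsub0 0).trans (cs_subset_ws f ε q))
  have hΛWu : Λ ⊆ Wu f ε q := by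
    intro y hy
    intro n
    have hyn : y ∈ S n := (iInter_subset S n) hy
    obtain ⟨a, ha, rfl⟩ := hyn
    set M := k * n with hM
    have hnM : n ≤ M := Nat.le_mul_of_pos_left n hk
    have hli : Function.LeftInverse ⇑f.symm ⇑f := f.symm_apply_apply
    have e1 : (⇑f.symm)^[n] ((⇑f)^[M] a) = (⇑f)^[M - n] a := by
      have h1 : (⇑f)^[M] a = (⇑f)^[n] ((⇑f)^[M - n] a) := by
        rw [← Function.iterate_add_apply]; congr 1; omega
      rw [h1, (hli.iterate n) _]
    have h1q : q = (⇑f)^[n] ((⇑f)^[M - n] q) := by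
      conv_lhs => rw [← hqfix n]
      rw [← Function.iterate_add_apply]; congr 1; omega
    have e2 : (⇑f.symm)^[n] q = (⇑f)^[M - n] q := by
      conv_lhs => rw [h1q]
      exact (hli.iterate n) _
    rw [e1, e2]
    exact (cs_subset_ws f ε q ha) (M - n)
  have hΛclosed : IsClosed Λ := isClosed_iInter fun m => (hScp m).isClosed
  have hΛcp : IsCompact Λ := (hScp 0).of_isClosed_subset hΛclosed (iInter_subset S 0)
  have hΛcn : IsPreconnected Λ := isPreconnected_iInter_nested hnest hScp hScn
  have hdistq : ∀ y ∈ Λ, ∀ n : ℤ, dist (zIter f n q) (zIter f n y) ≤ ε := by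
    intro y hy n
    unfold zIter
    split_ifs with h
    · exact hΛWs hy n.toNat
    · exact hΛWu hy (-n).toNat
  have hdiam : ∀ n : ℤ, Metric.diam (zIter f n '' Λ) ≤ c := by
    intro n
    refine Metric.diam_le_of_forall_dist_le (le_of_lt hexp.1) ?_
    rintro _ ⟨y, hy, rfl⟩ _ ⟨y', hy', rfl⟩
    calc dist (zIter f n y) (zIter f n y')
        ≤ dist (zIter f n y) (zIter f n q) + dist (zIter f n q) (zIter f n y') :=
          dist_triangle _ _ _
      _ ≤ ε + ε := add_le_add (by rw [dist_comm]; exact hdistq y hy n) (hdistq y' hy' n)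
      _ ≤ c := by linarith
  have hsing : Λ.Subsingleton :=
    hexp.2 Λ ⟨hΛcp, ⟨⟨q, hqΛ⟩, hΛcn⟩⟩ hdiam
  exact hsing hηΛ hqΛ

/-- Uniform-continuity modulus for the first `k` iterates. -/
lemma modulus [CompactSpace X] (f : X ≃ₜ X) (k : ℕ) {r : ℝ} (hr : 0 < r) :
    ∃ r' : ℝ, 0 < r' ∧ r' ≤ r ∧
      ∀ x y : X, dist x y ≤ r' → ∀ j ≤ k, dist ((⇑f)^[j] x) ((⇑f)^[j] y) ≤ r := by
  have H : ∀ j : ℕ, ∃ d : ℝ, 0 < d ∧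
      ∀ x y : X, dist x y ≤ d → dist ((⇑f)^[j] x) ((⇑f)^[j] y) ≤ r := by
    intro j
    have huc : UniformContinuous ((⇑f)^[j]) :=
      CompactSpace.uniformContinuous_of_continuous (f.continuous.iterate j)
    rw [Metric.uniformContinuous_iff] at huc
    obtain ⟨d, hd, hd2⟩ := huc r hr
    exact ⟨d / 2, by linarith, fun x y hxy => (hd2 (lt_of_le_of_lt hxy (by linarith))).le⟩
  choose d hd1 hd2 using H
  have hne : (Finset.range (k + 1)).Nonempty := ⟨0, Finset.mem_range.mpr (Nat.succ_pos k)⟩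
  refine ⟨min r ((Finset.range (k + 1)).inf' hne d), ?_, min_le_left _ _, ?_⟩
  · apply lt_min hr
    rw [Finset.lt_inf'_iff]
    exact fun j _ => hd1 j
  · intro x y hxy j hj
    apply hd2 j x y
    refine hxy.trans ((min_le_right _ _).trans ?_)
    exact Finset.inf'_le d (Finset.mem_range.mpr (by omega))

lemma mem_cu_self (f : X ≃ₜ X) {ε : ℝ} (hε : 0 ≤ ε) (x : X) : x ∈ Cu f ε x :=
  mem_cs_self f.symm hε x

lemma cu_subset_wu (f : X ≃ₜ X) (ε : ℝ) (x : X) : Cu f ε x ⊆ Wu f ε x :=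
  cs_subset_ws f.symm ε x

lemma cu_mono (f : X ≃ₜ X) {ε ε' : ℝ} (h : ε ≤ ε') (x : X) : Cu f ε x ⊆ Cu f ε' x :=
  cs_mono f.symm h x

/-- Chaining of stable continua. -/
lemma cs_chain (f : X ≃ₜ X) {ρ : ℝ} {x u : X} (hu : u ∈ Cs f ρ x) :
    Cs f ρ x ⊆ Cs f (2 * ρ) u := by
  refine IsPreconnected.subset_connectedComponentIn (isPreconnected_cs f ρ x) hu ?_
  intro a ha n
  have h1 := cs_subset_ws f ρ x hu n
  have h2 := cs_subset_ws f ρ x ha n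
  calc dist ((⇑f)^[n] u) ((⇑f)^[n] a)
      ≤ dist ((⇑f)^[n] u) ((⇑f)^[n] x) + dist ((⇑f)^[n] x) ((⇑f)^[n] a) := dist_triangle _ _ _
    _ ≤ ρ + ρ := add_le_add (by rw [dist_comm]; exact h1) h2
    _ = 2 * ρ := by ring

lemma cu_chain (f : X ≃ₜ X) {ρ : ℝ} {x u : X} (hu : u ∈ Cu f ρ x) :
    Cu f ρ x ⊆ Cu f (2 * ρ) u :=
  cs_chain f.symm hu

/-- Backwards step for unstable continua, in terms of `f` itself. -/
lemma cu_inv_step (f : X ≃ₜ X) {R' R : ℝ} (hR' : 0 < R') (hR'R : R' ≤ R) {k : ℕ} {p : X}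
    (hp : (⇑f)^[k] p = p)
    (hmod : ∀ x y : X, dist x y ≤ R' → ∀ j ≤ k, dist ((⇑f)^[j] x) ((⇑f)^[j] y) ≤ R) :
    (⇑f)^[k] '' (Cu f R' p) ⊆ Cu f R p := by
  have hcoe : ⇑f.symm.symm = ⇑f := by rw [Homeomorph.symm_symm]
  have hp' : (⇑f.symm.symm)^[k] p = p := by rw [hcoe]; exact hp
  have hmod' : ∀ x y : X, dist x y ≤ R' →
      ∀ j ≤ k, dist ((⇑f.symm.symm)^[j] x) ((⇑f.symm.symm)^[j] y) ≤ R := by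
    rw [hcoe]; exact hmod
  have h := cs_inv_step f.symm hR' hR'R hp' hmod'
  rw [hcoe] at h
  exact h

end CwAux

open CwAux in
/-- A cwN-hyperbolic homeomorphism has only finitely many periodic points of each period. -/
theorem stmt7 {X : Type*} [MetricSpace X] [CompactSpace X]
    (f : X ≃ₜ X) (N : ℕ) (hf : CwNHyperbolic f N) :
    ∀ k : ℕ, 0 < k → {p : X | (⇑f)^[k] p = p}.Finite := by
  classical
  obtain ⟨⟨⟨c, hexp⟩, hLPS⟩, β, hβpos, hβ⟩ := hf
  have hc : 0 < c := hexp.1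
  intro k hk
  set ρ : ℝ := min β c / 2 with hρdef
  have hρ : 0 < ρ := by
    have h1 : 0 < min β c := lt_min hβpos hc
    rw [hρdef]; linarith
  have h2ρβ : 2 * ρ ≤ β := by
    have := min_le_left β c
    rw [hρdef]; linarith
  have h2ρc : 2 * ρ ≤ c := by
    have := min_le_right β c
    rw [hρdef]; linarith
  -- a decreasing sequence of radii adapted to k iterates of f
  have step : ∀ r : ℝ, ∃ r' : ℝ, 0 < r → (0 < r' ∧ r' ≤ r ∧
      ∀ x y : X, dist x y ≤ r' → ∀ j ≤ k, dist ((⇑f)^[j] x) ((⇑f)^[j] y) ≤ r) := by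
    intro r
    by_cases h : 0 < r
    · obtain ⟨r', h1, h2, h3⟩ := modulus f k h
      exact ⟨r', fun _ => ⟨h1, h2, h3⟩⟩
    · exact ⟨1, fun hr => absurd hr h⟩
  choose F hF using step
  set R : ℕ → ℝ := fun m => F^[m] ρ with hRdef
  have hR0 : R 0 = ρ := rfl
  have hRpos : ∀ m, 0 < R m := by
    intro m
    induction m with
    | zero => exact hρ
    | succ n ih =>
      have : R (n + 1) = F (R n) := by rw [hRdef]; simp [Function.iterate_succ_apply']
      rw [this]
      exact (hF _ ih).1
  have hRsucc : ∀ m, R (m + 1) = F (R m) := by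
    intro m; rw [hRdef]; simp [Function.iterate_succ_apply']
  have hRdec : ∀ m, R (m + 1) ≤ R m := by
    intro m; rw [hRsucc m]; exact (hF _ (hRpos m)).2.1
  have hRmod : ∀ m, ∀ x y : X, dist x y ≤ R (m + 1) →
      ∀ j ≤ k, dist ((⇑f)^[j] x) ((⇑f)^[j] y) ≤ R m := by
    intro m x y hxy
    rw [hRsucc m] at hxy
    exact (hF _ (hRpos m)).2.2 x y hxy
  have hRleρ : ∀ m, R m ≤ ρ := by
    intro m
    induction m with
    | zero => exact le_of_eq hR0
    | succ n ih => exact (hRdec n).trans ih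
  set ε : ℝ := R N with hεdef
  have hε : 0 < ε := hRpos N
  have heps_rho : ε ≤ ρ := hRleρ N
  obtain ⟨δ, hδpos, hδ⟩ := hLPS ε hε
  -- key separation property
  have key : ∀ p q : X, (⇑f)^[k] p = p → (⇑f)^[k] q = q → dist p q < δ → p = q := by
    intro p q hp hq hpq
    obtain ⟨ζ, hζu, hζs⟩ := hδ p q hpq
    -- stable memberships of all k-iterates of ζ
    have hCsIter : ∀ m : ℕ, (⇑f)^[m * k] ζ ∈ Cs f ε q := by
      intro m
      induction m with
      | zero => simpa using hζs
      | succ n ih =>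
        have h1 : (n + 1) * k = k + n * k := by ring
        rw [h1, Function.iterate_add_apply]
        exact cs_fwd_step f hε hq ⟨_, ih, rfl⟩
    -- unstable memberships with shrinking radii
    have hCuIter : ∀ i : ℕ, i ≤ N → (⇑f)^[i * k] ζ ∈ Cu f (R (N - i)) p := by
      intro i
      induction i with
      | zero => intro _; simpa using hζu
      | succ n ih =>
        intro hn1
        have hn : n ≤ N := by omega
        have hmem := ih hn
        have hNsub : N - n = (N - (n + 1)) + 1 := by omega
        rw [hNsub] at hmem
        have h1 : (n + 1) * k = k + n * k := by ring
        rw [h1, Function.iterate_add_apply]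
        exact cu_inv_step f (hRpos _) (hRdec _) hp (hRmod _) ⟨_, hmem, rfl⟩
    -- all these points lie in the sector of ζ at radius β
    have hζ_in : ∀ i : ℕ, i ≤ N → (⇑f)^[i * k] ζ ∈ Cs f β ζ ∩ Cu f β ζ := by
      intro i hi
      constructor
      · have h1 : (⇑f)^[i * k] ζ ∈ Cs f ρ q := cs_mono f (heps_rho) q (hCsIter i)
        have hζρ : ζ ∈ Cs f ρ q := cs_mono f heps_rho q hζs
        have h2 := cs_chain f hζρ h1
        exact cs_mono f (by linarith) ζ h2
      · have h1 : (⇑f)^[i * k] ζ ∈ Cu f ρ p :=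
          cu_mono f (hRleρ (N - i)) p (hCuIter i hi)
        have hζρ : ζ ∈ Cu f ρ p := cu_mono f heps_rho p hζu
        have h2 := cu_chain f hζρ h1
        exact cu_mono f (by linarith) ζ h2
    -- pigeonhole in the finite sector
    obtain ⟨hfin, hcard⟩ := hβ ζ
    haveI := hfin.fintype
    have hcard' : Fintype.card (Cs f β ζ ∩ Cu f β ζ : Set X) < Fintype.card (Fin (N + 1)) := by
      have h1 : Nat.card (Cs f β ζ ∩ Cu f β ζ : Set X) = (Cs f β ζ ∩ Cu f β ζ).ncard :=
        Nat.card_coe_set_eq _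
      rw [Nat.card_eq_fintype_card] at h1
      rw [Fintype.card_fin]
      omega
    set g : Fin (N + 1) → (Cs f β ζ ∩ Cu f β ζ : Set X) :=
      fun i => ⟨(⇑f)^[i.val * k] ζ, hζ_in i.val (by omega)⟩ with hgdef
    obtain ⟨i, j, hne, heq⟩ := Fintype.exists_ne_map_eq_of_card_lt g hcard'
    have heqv : (⇑f)^[i.val * k] ζ = (⇑f)^[j.val * k] ζ := by
      have := congrArg Subtype.val heq
      simpa [hgdef] using this
    -- from a repeated value, produce a periodic point in both continua
    have hmain : ∀ a b : ℕ, a ≤ N → a < b →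
        (⇑f)^[a * k] ζ = (⇑f)^[b * k] ζ → p = q := by
      intro a b haN hab heq2
      set d := b - a with hddef
      have hd : 0 < d := by omega
      set k' := d * k with hk'def
      have hk' : 0 < k' := Nat.mul_pos hd hk
      set η := (⇑f)^[a * k] ζ with hηdef
      have hηfix : (⇑f)^[k'] η = η := by
        have h1 : (⇑f)^[k'] ((⇑f)^[a * k] ζ) = (⇑f)^[b * k] ζ := by
          rw [← Function.iterate_add_apply]
          congr 1
          rw [hk'def, hddef, ← Nat.add_mul, Nat.sub_add_cancel (le_of_lt hab)]
        rw [hηdef, h1, ← heq2]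
      have hqfix : (⇑f)^[k'] q = q := by
        rw [hk'def, mul_comm, Function.iterate_mul]
        exact Function.iterate_fixed hq d
      have hpfix : (⇑f)^[k'] p = p := by
        rw [hk'def, mul_comm, Function.iterate_mul]
        exact Function.iterate_fixed hp d
      have hη_q : η = q :=
        claimA f hexp hε (by linarith) hk' hqfix hηfix (hCsIter a)
      have hη_p : η = p := by
        have hexp' := cwExpansiveWith_symm hexp
        have hpfix' : (⇑f.symm)^[k'] p = p := symm_iterate_fixed hpfix
        have hηfix' : (⇑f.symm)^[k'] η = η := symm_iterate_fixed hηfix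
        have hmemp : η ∈ Cs f.symm ρ p :=
          cu_mono f (hRleρ (N - a)) p (hCuIter a haN)
        exact claimA f.symm hexp' hρ (by linarith) hk' hpfix' hηfix' hmemp
      rw [← hη_p, hη_q]
    have hij : i.val ≠ j.val := fun h => hne (Fin.ext h)
    rcases Nat.lt_or_ge i.val j.val with h | h
    · exact hmain i.val j.val (by omega) h heqv
    · have h' : j.val < i.val := by omega
      exact hmain j.val i.val (by omega) h' heqv.symm
  -- periodic points are δ-separated, hence finite by compactness
  obtain ⟨t, _hts, htfin, htcov⟩ :=
    finite_cover_balls_of_compact (isCompact_univ (X := X)) (show 0 < δ / 2 by linarith)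
  have hsub : {p : X | (⇑f)^[k] p = p} ⊆ ⋃ y ∈ t, ({p : X | (⇑f)^[k] p = p} ∩ ball y (δ / 2)) := by
    intro p hp
    have hcov := htcov (mem_univ p)
    simp only [mem_iUnion, exists_prop] at hcov ⊢
    obtain ⟨y, hyt, hyb⟩ := hcov
    exact ⟨y, hyt, hp, hyb⟩
  refine Set.Finite.subset (Set.Finite.biUnion htfin fun y _ => ?_) hsub
  apply Set.Subsingleton.finite
  intro a ha b hb
  have hab : dist a b < δ := by
    have h1 : dist a y < δ / 2 := ha.2
    have h2 : dist b y < δ / 2 := hb.2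
    calc dist a b ≤ dist a y + dist y b := dist_triangle _ _ _
      _ = dist a y + dist b y := by rw [dist_comm y b]
      _ < δ := by linarith
  exact key a b ha.1 hb.1 hab
end

section
/- Let f be a homeomorphism of a compact metric space satisfying: for each ε > 0 there is δ > 0 such that d(x,y) < δ implies C^u_ε(x) ∩ C^s_ε(y) ≠ ∅ (cw-local-product-structure), and suppose f is cw-expansive. If p, q are both fixed points of f and z ∈ C^u_δ(p) ∩ C^s_δ(q) with suitable constants as in the finiteness-of-fixed-points argument, then f⁻ⁱ(z) ∈ C^u_γ(p) ∩ C^s_γ(q) for all i ≥ 0, where γ bounds the diameters of iterates. In particular, if f is cwN-hyperbolic, then f has only finitely many fixed points. -/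
open Metric Set

variable {X : Type*} [MetricSpace X]

/-!
For fixed points `p, q`, the image of `Cᵘ_δ(p)` under `f⁻¹` and of `Cˢ_δ(q)` under `f⁻ⁱ` are
connected sets through the fixed point lying in `Wᵘ_δ(p)`, resp. (by the bound on backward
orbits) in `Wˢ_γ(q)`; hence they stay in the corresponding local continua.

For finiteness, let `p, q` be fixed points so close that the local product structure yields
`z ∈ Cᵘ_ε(p) ∩ Cˢ_ε(q)` with `ε` small. Uniform continuity of `f⁻¹, …, f⁻ᴺ` keeps the points
`f⁻ⁱ z`, `i ≤ N`, inside `Cˢ_c(z) ∩ Cᵘ_c(z)`, which has at most `N` points, so `z` is periodic.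
A periodic point of `Cˢ_ε(q)` lies in the continuum `⋂ₖ fᵏ(Cˢ_ε(q))`, whose whole orbit stays
`ε`-close to `q`; cw-expansivity collapses it, so `z = q`, and symmetrically `z = p`. Distinct
fixed points are therefore uniformly separated, hence finitely many in the compact space `X`.
-/

theorem isPreconnected_iInter_of_directed {Y ι : Type*} [TopologicalSpace Y] [T2Space Y]
    [Nonempty ι] {V : ι → Set Y} (hV : Directed (· ⊇ ·) V) (hcpt : ∀ i, IsCompact (V i))
    (hconn : ∀ i, IsPreconnected (V i)) : IsPreconnected (⋂ i, V i) := by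
  have hclosed : IsClosed (⋂ i, V i) := isClosed_iInter fun i => (hcpt i).isClosed
  rw [isPreconnected_iff_subset_of_fully_disjoint_closed hclosed]
  intro u v hu hv huv hdisj
  obtain ⟨i₀⟩ := ‹Nonempty ι›
  obtain ⟨U, W, hU, hW, huU, hvW, hUW⟩ := SeparatedNhds.of_isCompact_isCompact
    ((hcpt i₀).inter_left hu) ((hcpt i₀).inter_left hv)
    (hdisj.mono inter_subset_left inter_subset_left)
  have hK : ⋂ i, V i ⊆ U ∪ W := fun x hx => by
    have hx₀ : x ∈ V i₀ := mem_iInter.1 hx i₀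
    rcases huv hx with hxu | hxv
    exacts [Or.inl (huU ⟨hxu, hx₀⟩), Or.inr (hvW ⟨hxv, hx₀⟩)]
  obtain ⟨i, hi⟩ := exists_subset_nhds_of_isCompact hV hcpt
    fun x hx => (hU.union hW).mem_nhds (hK hx)
  obtain ⟨j, hji₀, hji⟩ := hV i₀ i
  have hKj : ⋂ i, V i ⊆ V j := iInter_subset V j
  have hKi₀ : ⋂ i, V i ⊆ V i₀ := iInter_subset V i₀
  rcases (hconn j).subset_or_subset hU hW hUW (hji.trans hi) with hjU | hjW
  · refine Or.inl fun x hx => (huv hx).resolve_right fun hxv => ?_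
    exact hUW.ne_of_mem (hjU (hKj hx)) (hvW ⟨hxv, hKi₀ hx⟩) rfl
  · refine Or.inr fun x hx => (huv hx).resolve_left fun hxu => ?_
    exact hUW.ne_of_mem (huU ⟨hxu, hKi₀ hx⟩) (hjW (hKj hx)) rfl

theorem isClosed_connectedComponentIn {Y : Type*} [TopologicalSpace Y] {F : Set Y}
    (hF : IsClosed F) (x : Y) : IsClosed (connectedComponentIn F x) := by
  rw [connectedComponentIn]
  split_ifs
  · exact hF.isClosedEmbedding_subtypeVal.isClosedMap _ isClosed_connectedComponent
  · exact isClosed_empty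

theorem IsCompact.finite_of_forall_dist_lt_imp_eq {S : Set X} (hS : IsCompact S) {δ : ℝ}
    (hδ : 0 < δ) (hsep : ∀ x ∈ S, ∀ y ∈ S, dist x y < δ → x = y) : S.Finite :=
  hS.finite ⟨DiscreteTopology.of_forall_le_dist hδ fun x y hxy =>
    le_of_not_gt fun h => hxy (Subtype.ext (hsep x x.2 y y.2 h))⟩

theorem exists_forall_dist_iterate_le [CompactSpace X] {g : X → X} (hg : Continuous g) (M : ℕ)
    {γ : ℝ} (hγ : 0 < γ) :
    ∃ ε > 0, ε ≤ γ ∧ ∀ x y, dist x y ≤ ε → ∀ j ≤ M, dist (g^[j] x) (g^[j] y) ≤ γ := by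
  obtain ⟨d, hd, hdist⟩ := Metric.uniformContinuous_iff.1
    (CompactSpace.uniformContinuous_of_continuous
      (continuous_pi fun j : Fin (M + 1) => hg.iterate j)) γ hγ
  refine ⟨min (d / 2) γ, by positivity, min_le_right _ _, fun x y hxy j hj => ?_⟩
  have hxy' : dist x y < d := by linarith [min_le_left (d / 2) γ]
  exact ((dist_le_pi_dist (fun j : Fin (M + 1) => g^[j] x) (fun j => g^[j] y)
    ⟨j, Nat.lt_succ_of_le hj⟩).trans_lt (hdist hxy')).le

theorem exists_isPeriodicPt_of_ncard_le {α : Type*} {g : α → α} (hg : Function.Injective g)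
    {S : Set α} (hS : S.Finite) {N : ℕ} (hcard : S.ncard ≤ N) {z : α} (hzS : ∀ i ≤ N, g^[i] z ∈ S) :
    ∃ m > 0, Function.IsPeriodicPt g m z := by
  have hlt : S.ncard < (Iic N).ncard := by simpa [Set.ncard_eq_toFinset_card'] using hcard
  obtain ⟨i, -, j, -, hij, heq⟩ :=
    exists_ne_map_eq_of_ncard_lt_of_maps_to hlt (fun i hi => hzS i hi) hS
  wlog hlt : i < j generalizing i j
  · exact this j i hij.symm heq.symm (lt_of_le_of_ne (not_lt.1 hlt) hij.symm)
  refine ⟨j - i, Nat.sub_pos_of_lt hlt, (hg.iterate i) ?_⟩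
  rw [← Function.iterate_add_apply, Nat.add_sub_cancel' hlt.le, heq]

section LocalContinua

variable {f : X ≃ₜ X} {ε δ γ : ℝ} {q x z : X}

theorem mem_Cs_self (hε : 0 ≤ ε) (x : X) : x ∈ Cs f ε x :=
  mem_connectedComponentIn fun n => by simpa using hε

theorem Cs_subset_Ws : Cs f ε x ⊆ Ws f ε x := connectedComponentIn_subset _ _

theorem Cs_mono (h : δ ≤ γ) : Cs f δ x ⊆ Cs f γ x :=
  connectedComponentIn_mono _ fun _ hy n => (hy n).trans h

theorem Cu_mono (h : δ ≤ γ) : Cu f δ x ⊆ Cu f γ x := Cs_mono (f := f.symm) h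

theorem isClosed_Ws : IsClosed (Ws f ε x) := by
  simp only [Ws, ofPred_forall]
  exact isClosed_iInter fun n =>
    isClosed_le (continuous_const.dist (f.continuous.iterate n)) continuous_const

theorem isCompact_Cs [CompactSpace X] : IsCompact (Cs f ε x) :=
  (isClosed_connectedComponentIn isClosed_Ws x).isCompact

theorem Cs_subset_Cs_two_mul (hz : z ∈ Cs f ε x) : Cs f ε x ⊆ Cs f (2 * ε) z := by
  refine isPreconnected_connectedComponentIn.subset_connectedComponentIn hz fun y hy n => ?_
  calc dist ((⇑f)^[n] z) ((⇑f)^[n] y)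
      ≤ dist ((⇑f)^[n] x) ((⇑f)^[n] z) + dist ((⇑f)^[n] x) ((⇑f)^[n] y) :=
        dist_triangle_left _ _ _
    _ ≤ 2 * ε := by linarith [Cs_subset_Ws hz n, Cs_subset_Ws hy n]

theorem Cu_subset_Cu_two_mul (hz : z ∈ Cu f ε x) : Cu f ε x ⊆ Cu f (2 * ε) z :=
  Cs_subset_Cs_two_mul (f := f.symm) hz

theorem mapsTo_Cs_of_mapsTo_Ws {f' : X ≃ₜ X} {g : X → X} (hg : Continuous g) (hgq : g q = q)
    (hδ : 0 ≤ δ) (h : MapsTo g (Ws f δ q) (Ws f' γ q)) : MapsTo g (Cs f δ q) (Cs f' γ q) :=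
  mapsTo_iff_image_subset.2 <|
    (isPreconnected_connectedComponentIn.image g hg.continuousOn).subset_connectedComponentIn
      ⟨q, mem_Cs_self hδ q, hgq⟩ (image_subset_iff.2 (h.mono_left Cs_subset_Ws))

theorem mapsTo_Cs (hq : f q = q) (hε : 0 ≤ ε) : MapsTo f (Cs f ε q) (Cs f ε q) := by
  refine mapsTo_Cs_of_mapsTo_Ws f.continuous hq hε fun y hy n => ?_
  have h := hy (n + 1)
  rwa [Function.iterate_succ_apply, hq] at h

theorem mapsTo_iterate_symm_Ws (hq : f q = q) (hδγ : δ ≤ γ) (i : ℕ)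
    (hback : ∀ y ∈ Ws f δ q, ∀ j ≤ i, dist ((⇑f.symm)^[j] y) q ≤ γ) :
    MapsTo (⇑f.symm)^[i] (Ws f δ q) (Ws f γ q) := by
  intro y hy n
  rw [Function.iterate_fixed hq]
  rcases le_total i n with hin | hni
  · have h := hy (n - i)
    rw [Function.iterate_fixed hq] at h
    rw [← Nat.sub_add_cancel hin, Function.iterate_add_apply,
      Function.LeftInverse.iterate f.apply_symm_apply i y]
    exact h.trans hδγ
  · rw [← Nat.add_sub_cancel' hni, Function.iterate_add_apply,
      Function.LeftInverse.iterate f.apply_symm_apply n, dist_comm]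
    exact hback y hy _ (Nat.sub_le i n)

theorem mapsTo_iterate_symm_Cs (hq : f q = q) (hδ : 0 ≤ δ) (hδγ : δ ≤ γ) (i : ℕ)
    (hback : ∀ y ∈ Ws f δ q, ∀ j ≤ i, dist ((⇑f.symm)^[j] y) q ≤ γ) :
    MapsTo (⇑f.symm)^[i] (Cs f δ q) (Cs f γ q) :=
  mapsTo_Cs_of_mapsTo_Ws (f.symm.continuous.iterate i)
    (Function.iterate_fixed (f.symm_apply_eq.2 hq.symm) i) hδ
    (mapsTo_iterate_symm_Ws hq hδγ i hback)

end LocalContinua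

section Expansive

variable {f : X ≃ₜ X} {c ε : ℝ} {q z : X} {m : ℕ}

theorem zIter_symm (f : X ≃ₜ X) (n : ℤ) : zIter f.symm n = zIter f (-n) := by
  funext x
  unfold zIter
  rcases lt_trichotomy n 0 with h | rfl | h
  · rw [if_neg (not_le.2 h), if_pos (by omega)]
    rfl
  · simp
  · rw [if_pos h.le, if_neg (by omega), neg_neg]

theorem CwExpansiveWith.symm (hf : CwExpansiveWith f c) : CwExpansiveWith f.symm c :=
  ⟨hf.1, fun C hC hdiam => hf.2 C hC fun n => by simpa [zIter_symm] using hdiam (-n)⟩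

theorem Function.IsPeriodicPt.of_homeomorph_symm (hz : Function.IsPeriodicPt f.symm m z) :
    Function.IsPeriodicPt f m z :=
  calc (⇑f)^[m] z = (⇑f)^[m] ((⇑f.symm)^[m] z) := by rw [hz.eq]
    _ = z := Function.LeftInverse.iterate f.apply_symm_apply m z

theorem dist_zIter_le_of_forall_mem_image_iterate (hq : f q = q) {y : X}
    (hy : ∀ k : ℕ, y ∈ (⇑f)^[k] '' Cs f ε q) (n : ℤ) : dist q (zIter f n y) ≤ ε := by
  unfold zIter
  split_ifs
  · have h := Cs_subset_Ws (by simpa using hy 0) n.toNat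
    rwa [Function.iterate_fixed hq] at h
  · obtain ⟨w, hw, rfl⟩ := hy (-n).toNat
    rw [Function.LeftInverse.iterate f.symm_apply_apply]
    simpa using Cs_subset_Ws hw 0

theorem CwExpansiveWith.eq_of_isPeriodicPt_mem_Cs [CompactSpace X] (hf : CwExpansiveWith f c)
    (hεc : 2 * ε ≤ c) (hq : f q = q) (hm : 0 < m) (hz : Function.IsPeriodicPt f m z)
    (hzq : z ∈ Cs f ε q) : z = q := by
  have hε : 0 ≤ ε := dist_nonneg.trans (Cs_subset_Ws hzq 0)
  set K := ⋂ k : ℕ, (⇑f)^[k] '' Cs f ε q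
  have hqK : q ∈ K := mem_iInter.2 fun k => ⟨q, mem_Cs_self hε q, Function.iterate_fixed hq k⟩
  -- `z = f^[k] (f^[m * k - k] z)` and `Cs f ε q` is forward invariant.
  have hzK : z ∈ K := mem_iInter.2 fun k => by
    refine ⟨(⇑f)^[m * k - k] z, (mapsTo_Cs hq hε).iterate _ hzq, ?_⟩
    rw [← Function.iterate_add_apply, Nat.add_sub_cancel' (Nat.le_mul_of_pos_left k hm)]
    exact (hz.mul_const k).eq
  have hcpt : ∀ k, IsCompact ((⇑f)^[k] '' Cs f ε q) :=
    fun k => isCompact_Cs.image (f.continuous.iterate k)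
  have hanti : Antitone fun k => (⇑f)^[k] '' Cs f ε q := antitone_nat_of_succ_le fun k => by
    rw [Function.iterate_succ, image_comp]
    exact image_mono (mapsTo_Cs hq hε).image_subset
  have hKconn : IsPreconnected K := isPreconnected_iInter_of_directed hanti.directed_ge hcpt
    fun k => isPreconnected_connectedComponentIn.image _ (f.continuous.iterate k).continuousOn
  refine hf.2 K ⟨(isClosed_iInter fun k => (hcpt k).isClosed).isCompact, ⟨q, hqK⟩, hKconn⟩
    (fun n => ?_) hzK hqK
  refine (diam_mono ?_ isBounded_closedBall).trans ((diam_closedBall (x := q) hε).trans hεc)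
  rintro _ ⟨y, hy, rfl⟩
  exact mem_closedBall'.2 (dist_zIter_le_of_forall_mem_image_iterate hq (mem_iInter.1 hy) n)

end Expansive

theorem exists_pos_forall_fixed_dist_lt_imp_eq [CompactSpace X] {f : X ≃ₜ X} {N : ℕ}
    (hcw : CwExpansive f) (hlps : CwLPS f) (hNe : CwNExpansive f N) :
    ∃ δ > 0, ∀ p q, f p = p → f q = q → dist p q < δ → p = q := by
  obtain ⟨c₀, hexp⟩ := hcw
  obtain ⟨c, hc, hN⟩ := hNe
  obtain ⟨γ, hγ, hγc, hγc₀⟩ : ∃ γ > 0, 2 * γ ≤ c ∧ 2 * γ ≤ c₀ :=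
    ⟨min c c₀ / 2, by have := hexp.1; positivity, by linarith [min_le_left c c₀],
      by linarith [min_le_right c c₀]⟩
  obtain ⟨ε, hε, hεγ, hcont⟩ := exists_forall_dist_iterate_le f.symm.continuous N hγ
  obtain ⟨δ, hδ, hprod⟩ := hlps ε hε
  refine ⟨δ, hδ, fun p q hp hq hpq => ?_⟩
  obtain ⟨z, hzp, hzq⟩ := hprod p q hpq
  have hp' : f.symm p = p := f.symm_apply_eq.2 hp.symm
  have hq' : f.symm q = q := f.symm_apply_eq.2 hq.symm
  have hback : ∀ y ∈ Ws f ε q, ∀ j ≤ N, dist ((⇑f.symm)^[j] y) q ≤ γ := fun y hy j hj => by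
    simpa [Function.iterate_fixed hq'] using hcont y q (by simpa [dist_comm] using hy 0) j hj
  -- `N + 1` backward iterates of `z` in a set of at most `N` points make `z` periodic.
  have horbit : ∀ i ≤ N, (⇑f.symm)^[i] z ∈ Cs f c z ∩ Cu f c z := fun i hi =>
    ⟨Cs_mono hγc (Cs_subset_Cs_two_mul (Cs_mono hεγ hzq)
        (mapsTo_iterate_symm_Cs hq hε.le hεγ i (fun y hy j hj => hback y hy j (hj.trans hi)) hzq)),
      Cu_mono hγc (Cu_subset_Cu_two_mul (Cu_mono hεγ hzp)
        (Cu_mono hεγ (((mapsTo_Cs (f := f.symm) hp' hε.le).iterate i) hzp)))⟩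
  obtain ⟨m, hm, hzm⟩ := exists_isPeriodicPt_of_ncard_le f.symm.injective (hN z).1 (hN z).2 horbit
  have h2ε : 2 * ε ≤ c₀ := by linarith
  calc p = z := (hexp.symm.eq_of_isPeriodicPt_mem_Cs h2ε hp' hm hzm hzp).symm
    _ = q := hexp.eq_of_isPeriodicPt_mem_Cs h2ε hq hm hzm.of_homeomorph_symm hzq

/-- For fixed points p, q and z ∈ Cᵘ_δ(p) ∩ Cˢ_δ(q) with suitable constants,
all backward iterates of z remain in Cᵘ_γ(p) ∩ Cˢ_γ(q); in particular a
cwN-hyperbolic homeomorphism has only finitely many fixed points. -/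
theorem stmt14 {X : Type*} [MetricSpace X] [CompactSpace X]
    (f : X ≃ₜ X) (N : ℕ)
    (hcw : CwExpansive f) (hlps : CwLPS f) (hNe : CwNExpansive f N)
    (p q : X) (hp : f p = p) (hq : f q = q)
    (δ γ : ℝ) (hδ : 0 < δ) (hδγ : δ ≤ γ)
    (hstable : ∀ y ∈ Ws f δ q, ∀ i : ℕ, dist ((⇑f.symm)^[i] y) q ≤ γ)
    (z : X) (hz : z ∈ Cu f δ p ∩ Cs f δ q) :
    (∀ i : ℕ, (⇑f.symm)^[i] z ∈ Cu f γ p ∩ Cs f γ q) ∧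
    {x : X | f x = x}.Finite := by
  refine ⟨fun i => ⟨?_, ?_⟩, ?_⟩
  · have hp' : f.symm p = p := f.symm_apply_eq.2 hp.symm
    exact Cu_mono hδγ (((mapsTo_Cs (f := f.symm) hp' hδ.le).iterate i) hz.1)
  · exact mapsTo_iterate_symm_Cs hq hδ.le hδγ i (fun y hy j _ => hstable y hy j) hz.2
  · obtain ⟨ε, hε, hsep⟩ := exists_pos_forall_fixed_dist_lt_imp_eq hcw hlps hNe
    exact (isClosed_eq f.continuous continuous_id).isCompact.finite_of_forall_dist_lt_imp_eq hε
      fun x hx y hy => hsep x y hx hy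
end
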